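/- arXiv:1508.04076 — 2 statements merged into one kernel-verified Lean document; each statement's English description precedes it below -/
import Mathlib

section
/- For two distinct points x₁, x₂ ∈ ℝ³, the two points t₁₂ = s((x₂−x₁)/‖x₂−x₁‖) and t₂₁ = s((x₁−x₂)/‖x₁−x₂‖) of the Riemann sphere are antipodal, and hence distinct; consequently the degree-1 polynomials p₁(t) and p₂(t) with respective roots t₁₂ and t₂₁ are linearly independent over ℂ. In other words, the Atiyah linear independence conjecture holds for n = 2. -/
open Polynomial

open scoped Classical in
/-- Stereographic projection from the unit sphere in `ℝ³` to the Riemann sphere. -/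
noncomputable def sproj (v : EuclideanSpace ℝ (Fin 3)) : OnePoint ℂ :=
  if v 2 = 1 then OnePoint.infty
  else (((v 0 : ℂ) + (v 1 : ℂ) * Complex.I) / (1 - (v 2 : ℂ)) : ℂ)

open scoped Classical in
/-- The antipodal map `t ↦ -1/t̄` on the Riemann sphere (with `0 ↔ ∞`). -/
noncomputable def antipode : OnePoint ℂ → OnePoint ℂ
  | OnePoint.infty => ((0 : ℂ) : OnePoint ℂ)
  | OnePoint.some z =>
      if z = 0 then OnePoint.infty else ((-1 / (starRingEnd ℂ z) : ℂ) : OnePoint ℂ)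

/-- The polynomial of degree at most `1` with root `ζ`: `t - ζ` for finite `ζ`, and the
constant polynomial `1` for `ζ = ∞`. -/
noncomputable def polyOfRoot : OnePoint ℂ → Polynomial ℂ
  | OnePoint.infty => 1
  | OnePoint.some z => X - C z

/-!
Under stereographic projection the antipodal map `v ↦ -v` of the sphere becomes
`t ↦ -1/t̄`, which has no fixed point because `t t̄ ≥ 0`. Two polynomials of degree
at most one with distinct roots are independent: evaluating at a finite root kills one
of them but not the other.
-/

open ComplexConjugate

lemma antipode_ne_self (t : OnePoint ℂ) : antipode t ≠ t := by
  cases t with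
  | infty => simp [antipode]
  | coe z =>
    by_cases hz : z = 0
    · simp [antipode, hz]
    · simp only [antipode, if_neg hz, ne_eq, OnePoint.coe_eq_coe]
      intro hfix
      have hnormSq : ((Complex.normSq z : ℝ) : ℂ) = -1 := by
        rw [div_eq_iff (by simpa using hz)] at hfix
        rw [← Complex.mul_conj]
        linear_combination -hfix
      have : Complex.normSq z = -1 := by exact_mod_cast hnormSq
      linarith [Complex.normSq_nonneg z]

lemma eval_polyOfRoot_ne_zero {a : OnePoint ℂ} {w : ℂ} (h : a ≠ w) :
    (polyOfRoot a).eval w ≠ 0 := by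
  cases a with
  | infty => simp [polyOfRoot]
  | coe z => simpa [polyOfRoot, sub_eq_zero, eq_comm] using h

lemma linearIndependent_polyOfRoot_coe {a : OnePoint ℂ} {w : ℂ} (h : a ≠ w) :
    LinearIndependent ℂ ![polyOfRoot a, polyOfRoot w] := by
  refine LinearIndependent.pair_iff.mpr fun s t hst => ?_
  have hs : s = 0 := by
    have hw : (polyOfRoot w).eval w = 0 := by simp [polyOfRoot]
    simpa [hw, eval_polyOfRoot_ne_zero h] using congrArg (eval w) hst
  refine ⟨hs, ?_⟩
  simpa [hs, polyOfRoot, X_sub_C_ne_zero] using hst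

lemma linearIndependent_polyOfRoot {a b : OnePoint ℂ} (hab : a ≠ b) :
    LinearIndependent ℂ ![polyOfRoot a, polyOfRoot b] := by
  cases b with
  | infty =>
    cases a with
    | infty => exact (hab rfl).elim
    | coe z =>
      exact LinearIndependent.pair_symm_iff.mp (linearIndependent_polyOfRoot_coe hab.symm)
  | coe w => exact linearIndependent_polyOfRoot_coe hab

lemma ofReal_add_ofReal_mul_I_ne_zero {a b c : ℝ} (habc : a ^ 2 + b ^ 2 + c ^ 2 = 1)
    (hc : c ^ 2 ≠ 1) : (a : ℂ) + b * Complex.I ≠ 0 := by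
  intro h
  have ha : a = 0 := by simpa using congrArg Complex.re h
  have hb : b = 0 := by simpa using congrArg Complex.im h
  subst ha hb
  exact hc (by linarith)

lemma neg_one_div_conj_stereo_eq_stereo_neg {a b c : ℝ} (habc : a ^ 2 + b ^ 2 + c ^ 2 = 1)
    (hc : c ^ 2 ≠ 1) :
    -1 / conj ((a + b * Complex.I) / (1 - c)) =
      ((-a : ℝ) + (-b : ℝ) * Complex.I) / (1 - (-c : ℝ)) := by
  obtain ⟨hc₁, hc₂⟩ := sq_ne_one_iff.mp hc
  have h1 : (1 : ℂ) + c ≠ 0 := by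
    norm_cast; intro h; apply hc₂; linarith
  have h2 : conj ((a : ℂ) + b * Complex.I) ≠ 0 :=
    (_root_.map_ne_zero _).mpr (ofReal_add_ofReal_mul_I_ne_zero habc hc)
  have habc' : (a : ℂ) ^ 2 + b ^ 2 + c ^ 2 = 1 := by exact_mod_cast habc
  rw [map_div₀, div_div_eq_mul_div, div_eq_div_iff h2 (by simpa using h1)]
  simp only [map_add, map_sub, map_mul, map_one, Complex.conj_ofReal, Complex.conj_I]
  push_cast
  linear_combination habc' - (b : ℂ) ^ 2 * Complex.I_sq

lemma sproj_neg {v : EuclideanSpace ℝ (Fin 3)} (hv : ‖v‖ = 1) :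
    sproj (-v) = antipode (sproj v) := by
  have habc : v 0 ^ 2 + v 1 ^ 2 + v 2 ^ 2 = 1 := by
    simpa [Fin.sum_univ_three, hv] using (EuclideanSpace.real_norm_sq_eq v).symm
  by_cases hpole : v 2 ^ 2 = 1
  · have ha : v 0 = 0 := by nlinarith
    have hb : v 1 = 0 := by nlinarith
    rcases sq_eq_one_iff.mp hpole with hc | hc <;> norm_num [sproj, antipode, ha, hb, hc]
  · obtain ⟨hc₁, hc₂⟩ := sq_ne_one_iff.mp hpole
    have hz : ((v 0 : ℂ) + v 1 * Complex.I) / (1 - v 2) ≠ 0 :=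
      div_ne_zero (ofReal_add_ofReal_mul_I_ne_zero habc hpole)
        (sub_ne_zero.mpr (by exact_mod_cast hc₁.symm))
    have hc₃ : (-v) 2 ≠ 1 := fun h => hc₂ (by simp at h; linarith)
    rw [sproj, sproj, if_neg hc₁, if_neg hc₃]
    simp only [antipode, if_neg hz, PiLp.neg_apply]
    exact congrArg _ (neg_one_div_conj_stereo_eq_stereo_neg habc hpole).symm

/-- For two distinct points `x₁, x₂ ∈ ℝ³`, the points `t₁₂ = s((x₂-x₁)/‖x₂-x₁‖)` and
`t₂₁ = s((x₁-x₂)/‖x₁-x₂‖)` of the Riemann sphere are antipodal, hence distinct, and the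
degree-one polynomials with roots `t₁₂` and `t₂₁` are linearly independent over `ℂ`:
the Atiyah linear independence conjecture holds for `n = 2`. -/
theorem stmt6 (x₁ x₂ : EuclideanSpace ℝ (Fin 3)) (h : x₁ ≠ x₂) :
    sproj (‖x₁ - x₂‖⁻¹ • (x₁ - x₂)) = antipode (sproj (‖x₂ - x₁‖⁻¹ • (x₂ - x₁))) ∧
    sproj (‖x₂ - x₁‖⁻¹ • (x₂ - x₁)) ≠ sproj (‖x₁ - x₂‖⁻¹ • (x₁ - x₂)) ∧
    LinearIndependent ℂ
      ![polyOfRoot (sproj (‖x₂ - x₁‖⁻¹ • (x₂ - x₁))),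
        polyOfRoot (sproj (‖x₁ - x₂‖⁻¹ • (x₁ - x₂)))] := by
  set v := ‖x₂ - x₁‖⁻¹ • (x₂ - x₁)
  have hv : ‖v‖ = 1 := norm_smul_inv_norm (sub_ne_zero.mpr h.symm)
  have hneg : ‖x₁ - x₂‖⁻¹ • (x₁ - x₂) = -v := by
    rw [norm_sub_rev, ← smul_neg, neg_sub]
  have hanti : sproj (-v) = antipode (sproj v) := sproj_neg hv
  have hne : sproj v ≠ sproj (-v) := hanti ▸ (antipode_ne_self _).symm
  rw [hneg]
  exact ⟨hanti, hne, linearIndependent_polyOfRoot hne⟩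
end

section
/- The normalized determinant D_{Sp(n)} = det(M)/V is independent of the choices of Hopf lifts of the points t_{ab}^{±±} and t_a^{±}. -/
open Polynomial

open scoped Classical in
/-- The Hopf map: `(u,v)` is a Hopf lift of the root of `u t - v`. -/
noncomputable def hopf (w : ℂ × ℂ) : OnePoint ℂ :=
  if w.1 = 0 then OnePoint.infty else ((w.2 / w.1 : ℂ) : OnePoint ℂ)

/-- The linear polynomial `p_z(t) = u t - v` associated to a Hopf lift `z = (u,v)`. -/
noncomputable def lin (z : ℂ × ℂ) : Polynomial ℂ := C z.1 * X - C z.2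

/-- The `2×2` determinant `det(w, w')` of two vectors of `ℂ²`. -/
def det2 (w w' : ℂ × ℂ) : ℂ := w.1 * w'.2 - w.2 * w'.1

/-- The unit vector in the direction of `v`. -/
noncomputable def unitize (v : EuclideanSpace ℝ (Fin 3)) : EuclideanSpace ℝ (Fin 3) :=
  ‖v‖⁻¹ • v

/-- A family of Hopf lifts for the `Sp(n)` construction: `A a b` lifts
`t = s((-x_a + x_b)/‖-x_a + x_b‖)` (so `A b a` lifts `s((x_a - x_b)/‖x_a - x_b‖)`),
`Bm a b = Bm b a` lifts `s((-x_a - x_b)/‖x_a + x_b‖)`, `Bp a b = Bp b a` lifts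
`s((x_a + x_b)/‖x_a + x_b‖)`, and `um a`, `up a` lift `s(∓x_a/‖x_a‖)`. -/
structure SpLifts (n : ℕ) (x : Fin n → EuclideanSpace ℝ (Fin 3)) where
  A : Fin n → Fin n → ℂ × ℂ
  Bm : Fin n → Fin n → ℂ × ℂ
  Bp : Fin n → Fin n → ℂ × ℂ
  um : Fin n → ℂ × ℂ
  up : Fin n → ℂ × ℂ
  hBm : ∀ a b, Bm a b = Bm b a
  hBp : ∀ a b, Bp a b = Bp b a
  hA : ∀ a b, a ≠ b → A a b ≠ 0 ∧ hopf (A a b) = sproj (unitize (-x a + x b))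
  hBm' : ∀ a b, a ≠ b → Bm a b ≠ 0 ∧ hopf (Bm a b) = sproj (unitize (-x a - x b))
  hBp' : ∀ a b, a ≠ b → Bp a b ≠ 0 ∧ hopf (Bp a b) = sproj (unitize (x a + x b))
  hum : ∀ a, um a ≠ 0 ∧ hopf (um a) = sproj (unitize (-x a))
  hup : ∀ a, up a ≠ 0 ∧ hopf (up a) = sproj (unitize (x a))

/-- The polynomial `p_a` of the `Sp(n)` construction, built from chosen Hopf lifts. -/
noncomputable def SpLifts.p {n : ℕ} {x : Fin n → EuclideanSpace ℝ (Fin 3)}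
    (L : SpLifts n x) (a : Fin n) : Polynomial ℂ :=
  lin (L.um a) * ∏ b ∈ Finset.univ.erase a, (lin (L.A a b) * lin (L.Bm a b))

/-- The polynomial `q_a` of the `Sp(n)` construction, built from chosen Hopf lifts. -/
noncomputable def SpLifts.q {n : ℕ} {x : Fin n → EuclideanSpace ℝ (Fin 3)}
    (L : SpLifts n x) (a : Fin n) : Polynomial ℂ :=
  lin (L.up a) * ∏ b ∈ Finset.univ.erase a, (lin (L.A b a) * lin (L.Bp a b))

open scoped Classical in
/-- The normalized determinant `D_{Sp(n)} = det(M)/V` with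
`M = (p₁, q₁, …, p_n, q_n)` the `2n × 2n` coefficient matrix and
`V = ∏_{a<b} det(v_{ab}^{-+}, v_{ab}^{+-})² det(v_{ab}^{--}, v_{ab}^{++})²
∏_a det(v_a^-, v_a^+)`. -/
noncomputable def SpLifts.D {n : ℕ} {x : Fin n → EuclideanSpace ℝ (Fin 3)}
    (L : SpLifts n x) : ℂ :=
  (Matrix.of fun i j : Fin (2 * n) =>
      if j.1 % 2 = 0 then (L.p ⟨j.1 / 2, by omega⟩).coeff i.1
      else (L.q ⟨j.1 / 2, by omega⟩).coeff i.1).det /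
    ((∏ pr ∈ Finset.univ.filter (fun pr : Fin n × Fin n => pr.1 < pr.2),
        det2 (L.A pr.1 pr.2) (L.A pr.2 pr.1) ^ 2) *
      (∏ pr ∈ Finset.univ.filter (fun pr : Fin n × Fin n => pr.1 < pr.2),
        det2 (L.Bm pr.1 pr.2) (L.Bp pr.1 pr.2) ^ 2) *
      ∏ a, det2 (L.um a) (L.up a))

/- ### Auxiliary lemmas -/

lemma hopf_prop {w w' : ℂ × ℂ} (hw : w ≠ 0) (hw' : w' ≠ 0) (h : hopf w = hopf w') :
    ∃ c : ℂ, c ≠ 0 ∧ w' = c • w := by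
  unfold hopf at h
  by_cases h1 : w.1 = 0
  · by_cases h1' : w'.1 = 0
    · have h2 : w.2 ≠ 0 := by
        intro h2; exact hw (Prod.ext h1 h2)
      have h2' : w'.2 ≠ 0 := by
        intro h2; exact hw' (Prod.ext h1' h2)
      refine ⟨w'.2 / w.2, div_ne_zero h2' h2, ?_⟩
      apply Prod.ext <;> simp [h1, h1', div_mul_cancel₀, h2]
    · simp [h1, h1'] at h
  · by_cases h1' : w'.1 = 0
    · simp [h1, h1'] at h
    · simp only [if_neg h1, if_neg h1', OnePoint.coe_eq_coe] at h
      refine ⟨w'.1 / w.1, div_ne_zero h1' h1, ?_⟩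
      apply Prod.ext
      · simp [div_mul_cancel₀, h1]
      · have h' : w.2 * w'.1 = w'.2 * w.1 := by
          field_simp at h
          linear_combination h
        simp only [Prod.smul_snd, smul_eq_mul]
        field_simp
        linear_combination -h'

lemma smul_cancel {w : ℂ × ℂ} {c d : ℂ} (hw : w ≠ 0) (h : c • w = d • w) : c = d := by
  have h1 : c * w.1 = d * w.1 := congrArg Prod.fst h
  have h2 : c * w.2 = d * w.2 := congrArg Prod.snd h
  by_cases hw1 : w.1 = 0
  · have hw2 : w.2 ≠ 0 := fun h2' => hw (Prod.ext hw1 h2')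
    exact mul_right_cancel₀ hw2 h2
  · exact mul_right_cancel₀ hw1 h1

lemma lin_smul (c : ℂ) (w : ℂ × ℂ) : lin (c • w) = C c * lin w := by
  simp only [lin, Prod.smul_fst, Prod.smul_snd, smul_eq_mul, map_mul]
  ring

lemma det2_smul (c d : ℂ) (w w' : ℂ × ℂ) :
    det2 (c • w) (d • w') = c * d * det2 w w' := by
  simp only [det2, Prod.smul_fst, Prod.smul_snd, smul_eq_mul]; ring

lemma inner_erase {n : ℕ} (a : Fin n) (f : Fin n → ℂ) :
    (∏ b ∈ Finset.univ.erase a, f b)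
      = ∏ b, (if a < b then f b else 1) * (if b < a then f b else 1) := by
  have h1 : (∏ b ∈ Finset.univ.erase a, f b)
      = ∏ b ∈ Finset.univ.erase a,
          ((if a < b then f b else 1) * (if b < a then f b else 1)) := by
    refine Finset.prod_congr rfl fun b hb => ?_
    have hba : b ≠ a := Finset.ne_of_mem_erase hb
    rcases lt_trichotomy a b with h | h | h
    · simp [h, asymm h]
    · exact absurd h.symm hba
    · simp [h, asymm h]
  rw [h1]
  refine Finset.prod_erase _ ?_
  simp

lemma prod_erase_pairs {n : ℕ} (F : Fin n → Fin n → ℂ) :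
    (∏ a, ∏ b ∈ Finset.univ.erase a, F a b)
      = ∏ pr ∈ Finset.univ.filter (fun pr : Fin n × Fin n => pr.1 < pr.2),
          F pr.1 pr.2 * F pr.2 pr.1 := by
  have hR : (∏ pr ∈ Finset.univ.filter (fun pr : Fin n × Fin n => pr.1 < pr.2),
          F pr.1 pr.2 * F pr.2 pr.1)
      = ∏ pr : Fin n × Fin n, (if pr.1 < pr.2 then F pr.1 pr.2 * F pr.2 pr.1 else 1) :=
    Finset.prod_filter _ _
  rw [hR, Fintype.prod_prod_type]
  calc (∏ a, ∏ b ∈ Finset.univ.erase a, F a b)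
      = ∏ a, ∏ b, (if a < b then F a b else 1) * (if b < a then F a b else 1) := by
        exact Finset.prod_congr rfl fun a _ => inner_erase a (F a)
    _ = (∏ a, ∏ b, (if a < b then F a b else 1)) * ∏ a, ∏ b, (if b < a then F a b else 1) := by
        rw [← Finset.prod_mul_distrib]
        exact Finset.prod_congr rfl fun a _ => Finset.prod_mul_distrib
    _ = (∏ a, ∏ b, (if a < b then F a b else 1)) * ∏ a, ∏ b, (if a < b then F b a else 1) := by
        congr 1
        rw [Finset.prod_comm]
    _ = ∏ a, ∏ b, (if a < b then F a b else 1) * (if a < b then F b a else 1) := by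
        rw [← Finset.prod_mul_distrib]
        exact Finset.prod_congr rfl fun a _ => Finset.prod_mul_distrib.symm
    _ = ∏ a, ∏ b, (if a < b then F a b * F b a else 1) := by
        refine Finset.prod_congr rfl fun a _ => Finset.prod_congr rfl fun b _ => ?_
        by_cases h : a < b <;> simp [h]

lemma prod_range_two_mul (n : ℕ) (f : ℕ → ℂ) :
    ∏ j ∈ Finset.range (2*n), f j = ∏ a ∈ Finset.range n, (f (2*a) * f (2*a+1)) := by
  induction n with
  | zero => simp
  | succ n ih =>
    rw [show 2*(n+1) = (2*n+1)+1 by ring, Finset.prod_range_succ, Finset.prod_range_succ,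
      Finset.prod_range_succ, ih]
    ring

lemma prod_col {n : ℕ} (cp cq : Fin n → ℂ) :
    (∏ j : Fin (2*n), (if j.1 % 2 = 0 then cp ⟨j.1/2, by omega⟩ else cq ⟨j.1/2, by omega⟩))
      = ∏ a, cp a * cq a := by
  classical
  set f : ℕ → ℂ := fun j => if h : j < 2*n then
      (if j % 2 = 0 then cp ⟨j/2, by omega⟩ else cq ⟨j/2, by omega⟩) else 1 with hf
  have h1 : (∏ j : Fin (2*n), (if j.1 % 2 = 0 then cp ⟨j.1/2, by omega⟩ else cq ⟨j.1/2, by omega⟩))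
      = ∏ j : Fin (2*n), f j.1 := by
    refine Finset.prod_congr rfl fun j _ => ?_
    rw [hf]
    simp only [j.isLt, dif_pos]
  rw [h1, Fin.prod_univ_eq_prod_range f, prod_range_two_mul]
  rw [← Fin.prod_univ_eq_prod_range (fun a => f (2*a) * f (2*a+1)) n]
  refine Finset.prod_congr rfl fun a _ => ?_
  have ha := a.isLt
  have h2a : 2*a.1 < 2*n := by omega
  have h2a1 : 2*a.1+1 < 2*n := by omega
  have e1 : (2*a.1) % 2 = 0 := by omega
  have e2 : ¬((2*a.1+1) % 2 = 0) := by omega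
  have e3 : (⟨2*a.1/2, by omega⟩ : Fin n) = a := Fin.ext (by simp only [Fin.val_mk]; omega)
  have e4 : (⟨(2*a.1+1)/2, by omega⟩ : Fin n) = a := Fin.ext (by simp only [Fin.val_mk]; omega)
  simp only [hf, dif_pos h2a, dif_pos h2a1, if_pos e1, if_neg e2, e3, e4]

/-- The normalized determinant `D_{Sp(n)} = det(M)/V` is independent of the choices of
Hopf lifts of the points `t_{ab}^{±±}` and `t_a^{±}`. -/
theorem stmt18 (n : ℕ) (x : Fin n → EuclideanSpace ℝ (Fin 3))
    (hx : ∀ a, x a ≠ 0)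
    (hreg : ∀ a b : Fin n, a < b → x a + x b ≠ 0 ∧ x a - x b ≠ 0)
    (L L' : SpLifts n x) :
    L.D = L'.D := by
  classical
  -- Step 1: proportionality scalars for each family of lifts
  obtain ⟨α, hα⟩ : ∃ α : Fin n → Fin n → ℂ,
      ∀ a b, a ≠ b → α a b ≠ 0 ∧ L'.A a b = α a b • L.A a b := by
    refine ⟨fun a b => if h : a ≠ b then
      (hopf_prop (L.hA a b h).1 (L'.hA a b h).1
        ((L.hA a b h).2.trans (L'.hA a b h).2.symm)).choose else 1, fun a b h => ?_⟩
    simpa [dif_pos h] using (hopf_prop (L.hA a b h).1 (L'.hA a b h).1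
      ((L.hA a b h).2.trans (L'.hA a b h).2.symm)).choose_spec
  obtain ⟨β, hβ⟩ : ∃ β : Fin n → Fin n → ℂ,
      ∀ a b, a ≠ b → β a b ≠ 0 ∧ L'.Bm a b = β a b • L.Bm a b := by
    refine ⟨fun a b => if h : a ≠ b then
      (hopf_prop (L.hBm' a b h).1 (L'.hBm' a b h).1
        ((L.hBm' a b h).2.trans (L'.hBm' a b h).2.symm)).choose else 1, fun a b h => ?_⟩
    simpa [dif_pos h] using (hopf_prop (L.hBm' a b h).1 (L'.hBm' a b h).1
      ((L.hBm' a b h).2.trans (L'.hBm' a b h).2.symm)).choose_spec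
  obtain ⟨γ, hγ⟩ : ∃ γ : Fin n → Fin n → ℂ,
      ∀ a b, a ≠ b → γ a b ≠ 0 ∧ L'.Bp a b = γ a b • L.Bp a b := by
    refine ⟨fun a b => if h : a ≠ b then
      (hopf_prop (L.hBp' a b h).1 (L'.hBp' a b h).1
        ((L.hBp' a b h).2.trans (L'.hBp' a b h).2.symm)).choose else 1, fun a b h => ?_⟩
    simpa [dif_pos h] using (hopf_prop (L.hBp' a b h).1 (L'.hBp' a b h).1
      ((L.hBp' a b h).2.trans (L'.hBp' a b h).2.symm)).choose_spec
  obtain ⟨μ, hμ⟩ : ∃ μ : Fin n → ℂ, ∀ a, μ a ≠ 0 ∧ L'.um a = μ a • L.um a := by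
    refine ⟨fun a => (hopf_prop (L.hum a).1 (L'.hum a).1
      ((L.hum a).2.trans (L'.hum a).2.symm)).choose, fun a => ?_⟩
    exact (hopf_prop (L.hum a).1 (L'.hum a).1
      ((L.hum a).2.trans (L'.hum a).2.symm)).choose_spec
  obtain ⟨ν, hν⟩ : ∃ ν : Fin n → ℂ, ∀ a, ν a ≠ 0 ∧ L'.up a = ν a • L.up a := by
    refine ⟨fun a => (hopf_prop (L.hup a).1 (L'.hup a).1
      ((L.hup a).2.trans (L'.hup a).2.symm)).choose, fun a => ?_⟩
    exact (hopf_prop (L.hup a).1 (L'.hup a).1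
      ((L.hup a).2.trans (L'.hup a).2.symm)).choose_spec
  -- symmetry of β and γ
  have hβs : ∀ a b, a ≠ b → β a b = β b a := by
    intro a b h
    have h1 := (hβ a b h).2
    have h2 := (hβ b a h.symm).2
    rw [← L'.hBm a b, ← L.hBm a b] at h2
    exact smul_cancel (L.hBm' a b h).1 (h1.symm.trans h2)
  have hγs : ∀ a b, a ≠ b → γ a b = γ b a := by
    intro a b h
    have h1 := (hγ a b h).2
    have h2 := (hγ b a h.symm).2
    rw [← L'.hBp a b, ← L.hBp a b] at h2
    exact smul_cancel (L.hBp' a b h).1 (h1.symm.trans h2)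
  -- Step 2: scaling of the polynomials
  set cp : Fin n → ℂ := fun a => μ a * ∏ b ∈ Finset.univ.erase a, (α a b * β a b) with hcp
  set cq : Fin n → ℂ := fun a => ν a * ∏ b ∈ Finset.univ.erase a, (α b a * γ a b) with hcq
  have hp : ∀ a, L'.p a = C (cp a) * L.p a := by
    intro a
    unfold SpLifts.p
    rw [(hμ a).2, lin_smul]
    have hprod : (∏ b ∈ Finset.univ.erase a, (lin (L'.A a b) * lin (L'.Bm a b)))
        = C (∏ b ∈ Finset.univ.erase a, (α a b * β a b)) *
          ∏ b ∈ Finset.univ.erase a, (lin (L.A a b) * lin (L.Bm a b)) := by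
      rw [map_prod, ← Finset.prod_mul_distrib]
      refine Finset.prod_congr rfl fun b hb => ?_
      have hab : a ≠ b := (Finset.ne_of_mem_erase hb).symm
      rw [(hα a b hab).2, (hβ a b hab).2, lin_smul, lin_smul, map_mul]
      ring
    rw [hprod, hcp]
    simp only [map_mul]
    ring
  have hq : ∀ a, L'.q a = C (cq a) * L.q a := by
    intro a
    unfold SpLifts.q
    rw [(hν a).2, lin_smul]
    have hprod : (∏ b ∈ Finset.univ.erase a, (lin (L'.A b a) * lin (L'.Bp a b)))
        = C (∏ b ∈ Finset.univ.erase a, (α b a * γ a b)) *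
          ∏ b ∈ Finset.univ.erase a, (lin (L.A b a) * lin (L.Bp a b)) := by
      rw [map_prod, ← Finset.prod_mul_distrib]
      refine Finset.prod_congr rfl fun b hb => ?_
      have hba : b ≠ a := Finset.ne_of_mem_erase hb
      have hab : a ≠ b := hba.symm
      rw [(hα b a hba).2, (hγ a b hab).2, lin_smul, lin_smul, map_mul]
      ring
    rw [hprod, hcq]
    simp only [map_mul]
    ring
  -- Step 3: scaling of the determinant
  set c : Fin (2*n) → ℂ := fun j =>
    if j.1 % 2 = 0 then cp ⟨j.1/2, by omega⟩ else cq ⟨j.1/2, by omega⟩ with hc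
  have hM : (Matrix.of fun i j : Fin (2 * n) =>
      if j.1 % 2 = 0 then (L'.p ⟨j.1 / 2, by omega⟩).coeff i.1
      else (L'.q ⟨j.1 / 2, by omega⟩).coeff i.1).det
      = (∏ j, c j) * (Matrix.of fun i j : Fin (2 * n) =>
      if j.1 % 2 = 0 then (L.p ⟨j.1 / 2, by omega⟩).coeff i.1
      else (L.q ⟨j.1 / 2, by omega⟩).coeff i.1).det := by
    rw [← Matrix.det_mul_row c]
    congr 1
    ext i j
    simp only [Matrix.of_apply, hc]
    by_cases h : j.1 % 2 = 0
    · simp only [if_pos h, hp, coeff_C_mul]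
    · simp only [if_neg h, hq, coeff_C_mul]
  -- Step 4: scaling of the normalizer V
  set K : ℂ := (∏ pr ∈ Finset.univ.filter (fun pr : Fin n × Fin n => pr.1 < pr.2),
        (α pr.1 pr.2 * α pr.2 pr.1) ^ 2) *
      (∏ pr ∈ Finset.univ.filter (fun pr : Fin n × Fin n => pr.1 < pr.2),
        (β pr.1 pr.2 * γ pr.1 pr.2) ^ 2) *
      ∏ a, (μ a * ν a) with hK
  have hV1 : (∏ pr ∈ Finset.univ.filter (fun pr : Fin n × Fin n => pr.1 < pr.2),
        det2 (L'.A pr.1 pr.2) (L'.A pr.2 pr.1) ^ 2)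
      = (∏ pr ∈ Finset.univ.filter (fun pr : Fin n × Fin n => pr.1 < pr.2),
        (α pr.1 pr.2 * α pr.2 pr.1) ^ 2) *
        ∏ pr ∈ Finset.univ.filter (fun pr : Fin n × Fin n => pr.1 < pr.2),
        det2 (L.A pr.1 pr.2) (L.A pr.2 pr.1) ^ 2 := by
    rw [← Finset.prod_mul_distrib]
    refine Finset.prod_congr rfl fun pr hpr => ?_
    have hne : pr.1 ≠ pr.2 := ne_of_lt (Finset.mem_filter.mp hpr).2
    rw [(hα pr.1 pr.2 hne).2, (hα pr.2 pr.1 hne.symm).2, det2_smul]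
    ring
  have hV2 : (∏ pr ∈ Finset.univ.filter (fun pr : Fin n × Fin n => pr.1 < pr.2),
        det2 (L'.Bm pr.1 pr.2) (L'.Bp pr.1 pr.2) ^ 2)
      = (∏ pr ∈ Finset.univ.filter (fun pr : Fin n × Fin n => pr.1 < pr.2),
        (β pr.1 pr.2 * γ pr.1 pr.2) ^ 2) *
        ∏ pr ∈ Finset.univ.filter (fun pr : Fin n × Fin n => pr.1 < pr.2),
        det2 (L.Bm pr.1 pr.2) (L.Bp pr.1 pr.2) ^ 2 := by
    rw [← Finset.prod_mul_distrib]
    refine Finset.prod_congr rfl fun pr hpr => ?_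
    have hne : pr.1 ≠ pr.2 := ne_of_lt (Finset.mem_filter.mp hpr).2
    rw [(hβ pr.1 pr.2 hne).2, (hγ pr.1 pr.2 hne).2, det2_smul]
    ring
  have hV3 : (∏ a, det2 (L'.um a) (L'.up a))
      = (∏ a, (μ a * ν a)) * ∏ a, det2 (L.um a) (L.up a) := by
    rw [← Finset.prod_mul_distrib]
    refine Finset.prod_congr rfl fun a _ => ?_
    rw [(hμ a).2, (hν a).2, det2_smul]
  -- Step 5: the column product equals K
  have hcK : (∏ j, c j) = K := by
    have h1 : (∏ j, c j) = ∏ a, cp a * cq a := prod_col cp cq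
    rw [h1]
    have h2 : ∀ a : Fin n, cp a * cq a
        = (μ a * ν a) * ((∏ b ∈ Finset.univ.erase a, (α a b * β a b)) *
            (∏ b ∈ Finset.univ.erase a, (α b a * γ a b))) := by
      intro a; rw [hcp, hcq]; ring
    rw [Finset.prod_congr rfl fun a _ => h2 a, Finset.prod_mul_distrib,
      Finset.prod_mul_distrib, Finset.prod_mul_distrib, prod_erase_pairs, prod_erase_pairs]
    have h3 : (∏ pr ∈ Finset.univ.filter (fun pr : Fin n × Fin n => pr.1 < pr.2),
          (α pr.1 pr.2 * α pr.2 pr.1) ^ 2) *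
        (∏ pr ∈ Finset.univ.filter (fun pr : Fin n × Fin n => pr.1 < pr.2),
          (β pr.1 pr.2 * γ pr.1 pr.2) ^ 2)
        = (∏ pr ∈ Finset.univ.filter (fun pr : Fin n × Fin n => pr.1 < pr.2),
            (α pr.1 pr.2 * β pr.1 pr.2) * (α pr.2 pr.1 * β pr.2 pr.1)) *
          ∏ pr ∈ Finset.univ.filter (fun pr : Fin n × Fin n => pr.1 < pr.2),
            (α pr.2 pr.1 * γ pr.1 pr.2) * (α pr.1 pr.2 * γ pr.2 pr.1) := by
      rw [← Finset.prod_mul_distrib, ← Finset.prod_mul_distrib]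
      refine Finset.prod_congr rfl fun pr hpr => ?_
      have hne : pr.1 ≠ pr.2 := ne_of_lt (Finset.mem_filter.mp hpr).2
      rw [hβs pr.2 pr.1 hne.symm, hγs pr.2 pr.1 hne.symm]
      ring
    have h4 : (∏ a, μ a * ν a) = (∏ a, μ a) * ∏ a, ν a := Finset.prod_mul_distrib
    rw [hK, h3, h4]
    ring
  -- Step 6: K is nonzero
  have hKne : K ≠ 0 := by
    rw [hK]
    refine mul_ne_zero (mul_ne_zero ?_ ?_) ?_
    · exact Finset.prod_ne_zero_iff.mpr fun pr hpr =>
        pow_ne_zero _ (mul_ne_zero (hα pr.1 pr.2 (ne_of_lt (Finset.mem_filter.mp hpr).2)).1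
          (hα pr.2 pr.1 (ne_of_lt (Finset.mem_filter.mp hpr).2).symm).1)
    · exact Finset.prod_ne_zero_iff.mpr fun pr hpr =>
        pow_ne_zero _ (mul_ne_zero (hβ pr.1 pr.2 (ne_of_lt (Finset.mem_filter.mp hpr).2)).1
          (hγ pr.1 pr.2 (ne_of_lt (Finset.mem_filter.mp hpr).2)).1)
    · exact Finset.prod_ne_zero_iff.mpr fun a _ => mul_ne_zero (hμ a).1 (hν a).1
  -- Step 7: conclude
  unfold SpLifts.D
  rw [hM, hcK, hV1, hV2, hV3]
  rw [show (∏ pr ∈ Finset.univ.filter (fun pr : Fin n × Fin n => pr.1 < pr.2),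
        (α pr.1 pr.2 * α pr.2 pr.1) ^ 2) *
        (∏ pr ∈ Finset.univ.filter (fun pr : Fin n × Fin n => pr.1 < pr.2),
        det2 (L.A pr.1 pr.2) (L.A pr.2 pr.1) ^ 2) *
      ((∏ pr ∈ Finset.univ.filter (fun pr : Fin n × Fin n => pr.1 < pr.2),
        (β pr.1 pr.2 * γ pr.1 pr.2) ^ 2) *
        ∏ pr ∈ Finset.univ.filter (fun pr : Fin n × Fin n => pr.1 < pr.2),
        det2 (L.Bm pr.1 pr.2) (L.Bp pr.1 pr.2) ^ 2) *
      ((∏ a, (μ a * ν a)) * ∏ a, det2 (L.um a) (L.up a))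
      = K * ((∏ pr ∈ Finset.univ.filter (fun pr : Fin n × Fin n => pr.1 < pr.2),
        det2 (L.A pr.1 pr.2) (L.A pr.2 pr.1) ^ 2) *
      (∏ pr ∈ Finset.univ.filter (fun pr : Fin n × Fin n => pr.1 < pr.2),
        det2 (L.Bm pr.1 pr.2) (L.Bp pr.1 pr.2) ^ 2) *
      ∏ a, det2 (L.um a) (L.up a)) from by rw [hK]; ring]
  rw [mul_div_mul_left _ _ hKne]
end
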